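/- arXiv:0807.1551 — 4 statements merged into one kernel-verified Lean document; each statement's English description precedes it below -/
import Mathlib

section
/- For a finite simple graph G, a vertex v with neighborhood N(v) = {v_1,...,v_k}, and the Gibbs measure of the hard-core model with activity λ, the marginal probability of v being unoccupied satisfies P_G(v ∉ I) = 1 / (1 + λ·∏_{i=1}^{k} P_{G_{i-1}}(v_i ∉ I)), where G_0 is the subgraph induced by V \ {v} and G_i is the subgraph induced by V \ {v, v_1, ..., v_i}, with the empty product equal to 1 when k = 0. -/
open Finset

/-- Hard-core partition function of the subgraph of `G` induced on `A`. -/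
noncomputable def hcZ {V : Type*} [DecidableEq V] (G : SimpleGraph V) [DecidableRel G.Adj]
    (lam : ℝ) (A : Finset V) : ℝ :=
  ∑ I ∈ A.powerset.filter (fun I => ∀ u ∈ I, ∀ w ∈ I, ¬ G.Adj u w), lam ^ I.card

/-- Probability, under the hard-core Gibbs measure on the subgraph induced on `A`,
that the random independent set does not contain `v`. -/
noncomputable def hcPnot {V : Type*} [DecidableEq V] (G : SimpleGraph V) [DecidableRel G.Adj]
    (lam : ℝ) (A : Finset V) (v : V) : ℝ :=
  (∑ I ∈ A.powerset.filter (fun I => (∀ u ∈ I, ∀ w ∈ I, ¬ G.Adj u w) ∧ v ∉ I),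
      lam ^ I.card) / hcZ G lam A

/-
Splitting the independent sets of `A` according to whether they contain `v` gives
`Z(A) = Z(A - v) + λ Z(A - N[v])`, hence
`P_A(v ∉ I) = Z(A - v) / Z(A) = (1 + λ Z(A - N[v]) / Z(A - v))⁻¹`.
Deleting the neighbours `v₁, …, v_k` one at a time, the ratio `Z(A - N[v]) / Z(A - v)`
telescopes into the product of the ratios `Z(G_i) / Z(G_{i-1}) = P_{G_{i-1}}(v_i ∉ I)`.
-/

lemma prod_range_div_of_ne_zero {K : Type*} [CommGroupWithZero K] (f : ℕ → K)
    (hf : ∀ i, f i ≠ 0) (n : ℕ) : ∏ i ∈ range n, f (i + 1) / f i = f n / f 0 :=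
  prod_range_induction (fun i => f (i + 1) / f i) (fun i => f i / f 0) (div_self (hf 0)) n
    fun k _ => (div_mul_div_cancel₀' (hf k) _ _).symm

lemma erase_sdiff_insert_toFinset_take {α : Type*} [DecidableEq α] (A : Finset α) (v : α)
    (l : List α) (i : Fin l.length) :
    (A \ insert v (l.take i).toFinset).erase (l.get i)
      = A \ insert v (l.take (i + 1)).toFinset := by
  ext x
  simp only [List.take_succ_eq_append_getElem i.isLt, List.toFinset_append, mem_erase, mem_sdiff,
    mem_insert, mem_union, List.mem_toFinset, List.mem_singleton, List.get_eq_getElem]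
  tauto

section
variable {V : Type*} [DecidableEq V] (G : SimpleGraph V)

lemma indep_insert_iff {v : V} {I : Finset V} :
    (∀ u ∈ insert v I, ∀ w ∈ insert v I, ¬ G.Adj u w) ↔
      (∀ u ∈ I, ¬ G.Adj v u) ∧ ∀ u ∈ I, ∀ w ∈ I, ¬ G.Adj u w := by
  simp only [mem_insert, forall_eq_or_imp, SimpleGraph.irrefl, not_false_eq_true, true_and]
  exact ⟨fun h => ⟨h.1, fun u hu => (h.2 u hu).2⟩,
    fun h => ⟨h.1, fun u hu => ⟨fun huv => h.1 u hu huv.symm, h.2 u hu⟩⟩⟩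

variable [DecidableRel G.Adj]

lemma powerset_sdiff_insert_neighborFinset (A : Finset V) (v : V) [Fintype (G.neighborSet v)] :
    (A \ insert v (G.neighborFinset v)).powerset
      = (A.erase v).powerset.filter (fun I => ∀ u ∈ I, ¬ G.Adj v u) := by
  ext I
  simp only [mem_powerset, mem_filter, subset_iff, mem_sdiff, mem_insert, mem_erase,
    SimpleGraph.mem_neighborFinset]
  grind

lemma hcZ_pos {lam : ℝ} (hlam : 0 ≤ lam) (A : Finset V) : 0 < hcZ G lam A :=
  sum_pos' (fun I _ => pow_nonneg hlam _) ⟨∅, by simp⟩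

variable (lam : ℝ)

lemma hcZ_eq_sum_ite (A : Finset V) :
    hcZ G lam A = ∑ I ∈ A.powerset,
      if ∀ u ∈ I, ∀ w ∈ I, ¬ G.Adj u w then lam ^ I.card else 0 :=
  sum_filter _ _

lemma hcPnot_eq_hcZ_erase_div (A : Finset V) (v : V) :
    hcPnot G lam A v = hcZ G lam (A.erase v) / hcZ G lam A := by
  unfold hcPnot hcZ
  congr 2
  ext I
  simp only [mem_filter, mem_powerset, subset_erase, and_assoc, and_comm (a := v ∉ I)]

lemma hcZ_eq_hcZ_erase_add (A : Finset V) {v : V} (hv : v ∈ A) [Fintype (G.neighborSet v)] :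
    hcZ G lam A = hcZ G lam (A.erase v)
      + lam * hcZ G lam (A \ insert v (G.neighborFinset v)) := by
  have hvA : v ∉ A.erase v := notMem_erase v A
  conv_lhs => rw [hcZ_eq_sum_ite, ← insert_erase hv, sum_powerset_insert hvA]
  rw [hcZ_eq_sum_ite G lam (A.erase v), hcZ_eq_sum_ite G lam (A \ _),
    powerset_sdiff_insert_neighborFinset, sum_filter, mul_sum]
  congr 1
  refine sum_congr rfl fun I hI => ?_
  have hvI : v ∉ I := fun h => hvA (mem_powerset.1 hI h)
  simp only [indep_insert_iff, ite_and, card_insert_of_notMem hvI, pow_succ', mul_ite, mul_zero]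

lemma prod_hcPnot_sdiff_take (hlam : 0 ≤ lam) (A : Finset V) (v : V) (l : List V) :
    ∏ i : Fin l.length, hcPnot G lam (A \ insert v (l.take i).toFinset) (l.get i)
      = hcZ G lam (A \ insert v l.toFinset) / hcZ G lam (A.erase v) := by
  set Z : ℕ → ℝ := fun j => hcZ G lam (A \ insert v (l.take j).toFinset)
  calc ∏ i : Fin l.length, hcPnot G lam (A \ insert v (l.take i).toFinset) (l.get i)
      = ∏ i : Fin l.length, Z (i + 1) / Z i := by
        simp only [hcPnot_eq_hcZ_erase_div, erase_sdiff_insert_toFinset_take, Z]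
    _ = Z l.length / Z 0 := by
        rw [Fin.prod_univ_eq_prod_range (fun j => Z (j + 1) / Z j),
          prod_range_div_of_ne_zero Z (fun j => (hcZ_pos G hlam _).ne')]
    _ = _ := by simp [Z, sdiff_singleton_eq_erase]

theorem hcPnot_eq_inv_one_add_mul_prod (hlam : 0 ≤ lam) (A : Finset V) {v : V} (hv : v ∈ A)
    [Fintype (G.neighborSet v)] (l : List V) (hlN : l.toFinset = G.neighborFinset v) :
    hcPnot G lam A v = (1 + lam * ∏ i : Fin l.length,
      hcPnot G lam (A \ insert v (l.take i).toFinset) (l.get i))⁻¹ := by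
  have hZ := (hcZ_pos G hlam (A.erase v)).ne'
  rw [prod_hcPnot_sdiff_take G lam hlam, hlN, hcPnot_eq_hcZ_erase_div,
    hcZ_eq_hcZ_erase_add G lam A hv, mul_div_assoc', one_add_div hZ, inv_div]

end

theorem hardcore_marginal_recursion_general {V : Type*} [Fintype V] [DecidableEq V]
    (G : SimpleGraph V) [DecidableRel G.Adj] (lam : ℝ) (hlam : 0 < lam)
    (v : V) (l : List V) (hlN : l.toFinset = G.neighborFinset v) :
    hcPnot G lam Finset.univ v
      = (1 + lam * ∏ i : Fin l.length,
          hcPnot G lam (Finset.univ \ insert v ((l.take i).toFinset)) (l.get i))⁻¹ :=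
  hcPnot_eq_inv_one_add_mul_prod G lam hlam.le univ (mem_univ v) l hlN

/-- For a finite graph `G`, a vertex `v` with neighborhood
`N(v) = {v₁, …, v_k}` (enumerated by the list `l`), the hard-core marginal satisfies
`P_G(v ∉ I) = 1 / (1 + λ · ∏_{i=1}^k P_{G_{i-1}}(v_i ∉ I))`, where `G_{i-1}` is the
subgraph induced by `V \ {v, v₁, …, v_{i-1}}`. -/
theorem hardcore_marginal_recursion {V : Type*} [Fintype V] [DecidableEq V]
    (G : SimpleGraph V) [DecidableRel G.Adj] (lam : ℝ) (hlam : 0 < lam)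
    (v : V) (l : List V) (hl : l.Nodup) (hlN : l.toFinset = G.neighborFinset v) :
    hcPnot G lam Finset.univ v
      = (1 + lam * ∏ i : Fin l.length,
          hcPnot G lam (Finset.univ \ insert v ((l.take i).toFinset)) (l.get i))⁻¹ :=
  hardcore_marginal_recursion_general G lam hlam v l hlN
end

section
/- For a finite simple graph G, a vertex v, and the monomer-dimer Gibbs measure with activity λ, the probability that v is unmatched satisfies P_G(v ∉ M) = 1 / (1 + λ·Σ_{u ∈ N(v)} P_{G_0}(u ∉ M)), where G_0 is the subgraph induced by V \ {v} and the sum is 0 when v is isolated. -/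
open Finset

/-- Monomer-dimer partition function of the subgraph of `G` induced on the
vertex set `A`: sum of `lam ^ |M|` over matchings `M` all of whose endpoints lie in `A`. -/
noncomputable def mdZ {V : Type*} [Fintype V] [DecidableEq V] (G : SimpleGraph V)
    [DecidableRel G.Adj] (lam : ℝ) (A : Finset V) : ℝ :=
  ∑ M ∈ G.edgeFinset.powerset.filter
      (fun M => (∀ e ∈ M, ∀ x : V, x ∈ e → x ∈ A) ∧
        ∀ e ∈ M, ∀ f ∈ M, e ≠ f → ∀ x : V, x ∈ e → x ∉ f),
    lam ^ M.card

/-- Probability under the monomer-dimer Gibbs measure on the subgraph induced on `A`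
that the random matching does not cover the vertex `v`. -/
noncomputable def mdPnot {V : Type*} [Fintype V] [DecidableEq V] (G : SimpleGraph V)
    [DecidableRel G.Adj] (lam : ℝ) (A : Finset V) (v : V) : ℝ :=
  (∑ M ∈ G.edgeFinset.powerset.filter
      (fun M => (∀ e ∈ M, ∀ x : V, x ∈ e → x ∈ A) ∧
        (∀ e ∈ M, ∀ f ∈ M, e ≠ f → ∀ x : V, x ∈ e → x ∉ f) ∧ ∀ e ∈ M, v ∉ e),
    lam ^ M.card) / mdZ G lam A

/-! Both sides are ratios of partition functions: a matching of `A` avoiding `v` is exactly a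
matching of `A ∖ {v}`, so `P_A(v ∉ M) = Z_{A∖v} / Z_A`. A matching of `A` covering `v` does so
through a unique edge `vu`, and removing it leaves a matching of `A ∖ {v, u}`; hence
`Z_A = Z_{A∖v} + λ Σ_{u ∼ v} Z_{A∖{v,u}}`, and dividing by `Z_{A∖v}` gives the recursion. -/

section Matchings

variable {V : Type*} [Fintype V] [DecidableEq V] (G : SimpleGraph V) [DecidableRel G.Adj]

def matchingsOn (A : Finset V) : Finset (Finset (Sym2 V)) :=
  G.edgeFinset.powerset.filter
    (fun M => (∀ e ∈ M, ∀ x : V, x ∈ e → x ∈ A) ∧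
      ∀ e ∈ M, ∀ f ∈ M, e ≠ f → ∀ x : V, x ∈ e → x ∉ f)

variable {G} in
lemma mem_matchingsOn {A : Finset V} {M : Finset (Sym2 V)} :
    M ∈ matchingsOn G A ↔ M ⊆ G.edgeFinset ∧ (∀ e ∈ M, ∀ x : V, x ∈ e → x ∈ A) ∧
      ∀ e ∈ M, ∀ f ∈ M, e ≠ f → ∀ x : V, x ∈ e → x ∉ f := by
  rw [matchingsOn, mem_filter, mem_powerset]

lemma mdZ_eq_sum_matchingsOn (lam : ℝ) (A : Finset V) :
    mdZ G lam A = ∑ M ∈ matchingsOn G A, lam ^ M.card :=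
  rfl

lemma mdZ_pos {lam : ℝ} (hlam : 0 < lam) (A : Finset V) : 0 < mdZ G lam A :=
  sum_pos (fun _ _ => pow_pos hlam _) ⟨∅, by simp⟩

lemma matchingsOn_erase (A : Finset V) (v : V) :
    matchingsOn G (A.erase v) = (matchingsOn G A).filter (fun M => ∀ e ∈ M, v ∉ e) := by
  ext M
  simp only [mem_filter, mem_matchingsOn, mem_erase]
  constructor
  · rintro ⟨hE, hA, hdisj⟩
    exact ⟨⟨hE, fun e he x hx => (hA e he x hx).2, hdisj⟩,
      fun e he hv => (hA e he v hv).1 rfl⟩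
  · rintro ⟨⟨hE, hA, hdisj⟩, hv⟩
    exact ⟨hE, fun e he x hx => ⟨fun hxv => hv e he (hxv ▸ hx), hA e he x hx⟩, hdisj⟩

lemma mdPnot_eq_div (lam : ℝ) (A : Finset V) (v : V) :
    mdPnot G lam A v = mdZ G lam (A.erase v) / mdZ G lam A := by
  rw [mdPnot, mdZ_eq_sum_matchingsOn G lam (A.erase v), matchingsOn_erase, matchingsOn,
    filter_filter]
  simp only [and_assoc]

variable {G}

lemma insert_mem_matchingsOn {A : Finset V} {v u : V} {M : Finset (Sym2 V)} (hadj : G.Adj v u)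
    (hv : v ∈ A) (hu : u ∈ A) (hM : M ∈ matchingsOn G ((A.erase v).erase u)) :
    insert s(v, u) M ∈ matchingsOn G A := by
  obtain ⟨hE, hA, hdisj⟩ := mem_matchingsOn.mp hM
  have hfree : ∀ e ∈ M, ∀ x ∈ e, x ∉ s(v, u) := by
    intro e he x hx hxvu
    have hxA := hA e he x hx
    rcases Sym2.mem_iff.mp hxvu with rfl | rfl <;> simp at hxA
  refine mem_matchingsOn.mpr ⟨insert_subset (by simpa using hadj) hE, ?_, ?_⟩
  · intro e he x hx
    rcases mem_insert.mp he with rfl | he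
    · rcases Sym2.mem_iff.mp hx with rfl | rfl <;> assumption
    · exact mem_of_mem_erase (mem_of_mem_erase (hA e he x hx))
  · intro e he f hf hef x hxe hxf
    rcases mem_insert.mp he with rfl | he <;> rcases mem_insert.mp hf with rfl | hf
    · exact hef rfl
    · exact hfree f hf x hxf hxe
    · exact hfree e he x hxe hxf
    · exact hdisj e he f hf hef x hxe hxf

lemma erase_mem_matchingsOn {A : Finset V} {v u : V} {M : Finset (Sym2 V)}
    (hM : M ∈ matchingsOn G A) (hvu : s(v, u) ∈ M) :
    M.erase s(v, u) ∈ matchingsOn G ((A.erase v).erase u) := by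
  obtain ⟨hE, hA, hdisj⟩ := mem_matchingsOn.mp hM
  refine mem_matchingsOn.mpr ⟨(erase_subset _ _).trans hE, ?_, ?_⟩
  · intro e he x hx
    obtain ⟨hne, he⟩ := mem_erase.mp he
    have hx' : x ≠ v ∧ x ≠ u := by
      simpa [Sym2.mem_iff, not_or] using hdisj e he _ hvu hne x hx
    simp [hx'.1, hx'.2, hA e he x hx]
  · intro e he f hf hef
    exact hdisj e (mem_of_mem_erase he) f (mem_of_mem_erase hf) hef

lemma sum_filter_edge_mem_matchingsOn (lam : ℝ) {A : Finset V} {v u : V} (hadj : G.Adj v u)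
    (hv : v ∈ A) (hu : u ∈ A) :
    ∑ M ∈ (matchingsOn G A).filter (s(v, u) ∈ ·), lam ^ M.card
      = lam * mdZ G lam ((A.erase v).erase u) := by
  rw [mdZ_eq_sum_matchingsOn, mul_sum]
  have hnotin : ∀ M ∈ matchingsOn G ((A.erase v).erase u), s(v, u) ∉ M := fun M hM hvu => by
    simpa using (mem_matchingsOn.mp hM).2.1 _ hvu v (Sym2.mem_mk_left v u)
  refine sum_bij' (fun M _ => M.erase s(v, u)) (fun M _ => insert s(v, u) M)
    (fun M hM => erase_mem_matchingsOn (mem_filter.mp hM).1 (mem_filter.mp hM).2)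
    (fun M hM => mem_filter.mpr ⟨insert_mem_matchingsOn hadj hv hu hM, mem_insert_self _ _⟩)
    (fun M hM => insert_erase (mem_filter.mp hM).2)
    (fun M hM => erase_insert (hnotin M hM)) ?_
  intro M hM
  rw [← card_erase_add_one (mem_filter.mp hM).2, pow_succ']

lemma filter_covers_eq_biUnion {A : Finset V} (v : V) :
    (matchingsOn G A).filter (fun M => ¬∀ e ∈ M, v ∉ e)
      = (G.neighborFinset v ∩ A).biUnion (fun u => (matchingsOn G A).filter (s(v, u) ∈ ·)) := by
  ext M
  simp only [mem_filter, mem_biUnion, mem_inter, SimpleGraph.mem_neighborFinset, not_forall,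
    not_not]
  constructor
  · rintro ⟨hM, e, he, hve⟩
    obtain ⟨u, rfl⟩ := Sym2.mem_iff_exists.mp hve
    have hadj : G.Adj v u := by simpa using (mem_matchingsOn.mp hM).1 he
    exact ⟨u, ⟨hadj, (mem_matchingsOn.mp hM).2.1 _ he u (Sym2.mem_mk_right v u)⟩, hM, he⟩
  · rintro ⟨u, -, hM, he⟩
    exact ⟨hM, _, he, Sym2.mem_mk_left v u⟩

lemma pairwiseDisjoint_filter_edge_mem_matchingsOn (A : Finset V) (v : V) (S : Finset V) :
    (S : Set V).PairwiseDisjoint (fun u => (matchingsOn G A).filter (s(v, u) ∈ ·)) := by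
  intro u _ w _ huw
  refine disjoint_left.mpr fun M hMu hMw => ?_
  have hne : s(v, u) ≠ s(v, w) := fun h => huw (Sym2.congr_right.mp h)
  exact (mem_matchingsOn.mp (mem_filter.mp hMu).1).2.2 _ (mem_filter.mp hMu).2 _
    (mem_filter.mp hMw).2 hne v (Sym2.mem_mk_left v u) (Sym2.mem_mk_left v w)

variable (G) in
lemma mdZ_eq_mdZ_erase_add (lam : ℝ) {A : Finset V} {v : V} (hv : v ∈ A) :
    mdZ G lam A = mdZ G lam (A.erase v)
      + lam * ∑ u ∈ G.neighborFinset v ∩ A, mdZ G lam ((A.erase v).erase u) := by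
  rw [mdZ_eq_sum_matchingsOn, ← sum_filter_add_sum_filter_not _ (fun M => ∀ e ∈ M, v ∉ e),
    ← matchingsOn_erase, ← mdZ_eq_sum_matchingsOn, filter_covers_eq_biUnion,
    sum_biUnion (pairwiseDisjoint_filter_edge_mem_matchingsOn _ _ _), mul_sum]
  refine congrArg _ (sum_congr rfl fun u hu => ?_)
  obtain ⟨hadj, huA⟩ := mem_inter.mp hu
  exact sum_filter_edge_mem_matchingsOn lam ((G.mem_neighborFinset v u).mp hadj) hv huA

end Matchings

/-- For a finite graph `G` and vertex `v`, the monomer-dimer marginal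
satisfies `P_G(v ∉ M) = 1 / (1 + λ · Σ_{u ∈ N(v)} P_{G₀}(u ∉ M))`, where `G₀` is the
subgraph induced by `V \ {v}`. -/
theorem monomer_dimer_marginal_recursion {V : Type*} [Fintype V] [DecidableEq V]
    (G : SimpleGraph V) [DecidableRel G.Adj] (lam : ℝ) (hlam : 0 < lam) (v : V) :
    mdPnot G lam Finset.univ v
      = (1 + lam * ∑ u ∈ G.neighborFinset v, mdPnot G lam (Finset.univ.erase v) u)⁻¹ := by
  have hZ := mdZ_pos G hlam (univ.erase v)
  simp only [mdPnot_eq_div]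
  rw [← sum_div, mdZ_eq_mdZ_erase_add G lam (mem_univ v), inter_univ]
  field_simp
end

section
/- For the hard-core model on a finite graph G of maximum degree Δ ≥ 3 with activity λ < (Δ−1)^{Δ−1}/(Δ−2)^{Δ}, there exist constants C > 0 and 0 < ρ < 1 depending only on λ and Δ such that for every vertex v and every t ∈ ℕ, |log Φ_G(v,t) − log Ψ_G(v,t)| ≤ C·ρ^t, where Φ and Ψ are the recursive upper/lower bound functions defined by Φ_Ĝ(v,0)=1, Ψ_Ĝ(v,0)=0, and for t>0 both satisfy F_Ĝ(v,t) = (1 + λ·∏_i F_{Ĝ_{i-1}}(v_i,t−1))^{-1} over the neighbors v_1,...,v_k of v with sequential vertex deletions. -/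
open Finset

/-- Sequential product `f A u₁ · f (A \ {u₁}) u₂ · …` along a list of vertices. -/
noncomputable def seqProd {V : Type*} [DecidableEq V] (f : Finset V → V → ℝ) :
    Finset V → List V → ℝ
  | _, [] => 1
  | A, u :: rest => f A u * seqProd f (A.erase u) rest

/-- The recursively defined quantity `Φ` (for `base = 1`) resp. `Ψ` (for `base = 0`) of
the hard-core computation-tree recursion: `F(0, A, v) = base`; for `t > 0`,
`F(t, A, v) = 1/(1+λ)` if `v` has no neighbors in `A`, and otherwise
`F(t, A, v) = (1 + λ · ∏ᵢ F(t-1, Aᵢ₋₁, vᵢ))⁻¹` over the neighbors `v₁, …, v_k` of `v`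
in `A`, with sequential vertex deletions. -/
noncomputable def hcRec {V : Type*} [Fintype V] [LinearOrder V] (G : SimpleGraph V)
    [DecidableRel G.Adj] (lam base : ℝ) : ℕ → Finset V → V → ℝ
  | 0, _, _ => base
  | t + 1, A, v =>
    if (G.neighborFinset v ∩ A.erase v) = ∅ then (1 + lam)⁻¹
    else (1 + lam * seqProd (hcRec G lam base t) (A.erase v)
            ((G.neighborFinset v ∩ A.erase v).sort (· ≤ ·)))⁻¹

/-!
Pass to the potential `φ = pot x = arcosh x^{-1/2}`, so that `x = sech² φ` and one step of the
recursion reads `φ = arsinh (√λ ∏ᵢ sech φᵢ)`. Along the segment joining the potentials of the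
children under `Φ` and under `Ψ`, the derivative of this map is at most
`(∑ᵢ tanh φᵢ) · tanh φ · max |Δφᵢ|`, and with `tᵢ = tanh φᵢ`, `Q = ∏ (1 - tᵢ²)` the square of that
rate is `(∑ tᵢ)² λQ / (1 + λQ)`. Cauchy–Schwarz and AM-GM on `d + 1` numbers give
`((∑ tᵢ)² - 1) Q ≤ (d - 1)^(d + 1) / d^d` for at most `d = Δ - 1` terms, so below the threshold
every non-root step contracts by a fixed `ρ < 1`: a vertex other than the root has lost its parent
and has at most `Δ - 1` children, while at the root the crude rate `Δ` suffices. Finally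
`log x = -2 log cosh φ`, and `log ∘ cosh` is `1`-Lipschitz.
-/

namespace HardCore

open Real

noncomputable def pot (x : ℝ) : ℝ := arcosh (√x)⁻¹

section Potential

variable {x y : ℝ}

lemma cosh_pot (hx₀ : 0 < x) (hx₁ : x ≤ 1) : cosh (pot x) = (√x)⁻¹ :=
  cosh_arcosh (one_le_inv₀ (sqrt_pos.2 hx₀) |>.2 (sqrt_le_one.2 hx₁))

lemma pot_anti (hx : 0 < x) (hxy : x ≤ y) : pot y ≤ pot x :=
  (arcosh_le_arcosh (inv_pos.2 (sqrt_pos.2 (hx.trans_le hxy))) (inv_pos.2 (sqrt_pos.2 hx))).2 <|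
    inv_anti₀ (sqrt_pos.2 hx) (sqrt_le_sqrt hxy)

@[simp] lemma pot_one : pot 1 = 0 := by simp [pot]

lemma pot_nonneg (hx₀ : 0 < x) (hx₁ : x ≤ 1) : 0 ≤ pot x :=
  pot_one ▸ pot_anti hx₀ hx₁

lemma pot_pos (hx₀ : 0 < x) (hx₁ : x < 1) : 0 < pot x :=
  arcosh_pos <| (one_lt_inv₀ (sqrt_pos.2 hx₀)).2 ((sqrt_lt' one_pos).2 (by simpa using hx₁))

lemma log_eq_neg_two_mul_log_cosh_pot (hx₀ : 0 < x) (hx₁ : x ≤ 1) :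
    log x = -2 * log (cosh (pot x)) := by
  rw [cosh_pot hx₀ hx₁, log_inv, log_sqrt hx₀.le]
  ring

lemma inv_cosh_pot_sq (hx₀ : 0 < x) (hx₁ : x ≤ 1) : (cosh (pot x) ^ 2)⁻¹ = x := by
  rw [cosh_pot hx₀ hx₁, inv_pow, inv_inv, sq_sqrt hx₀.le]

lemma pot_inv_one_add_sq (hy : 0 ≤ y) : pot (1 + y ^ 2)⁻¹ = arsinh y := by
  rw [pot, sqrt_inv, inv_inv, ← cosh_arsinh, arcosh_cosh (arsinh_nonneg_iff.2 hy)]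

lemma abs_pot_sub_pot_le {a b c : ℝ} (hc : 0 < c) (ha : a ∈ Set.Icc c 1) (hb : b ∈ Set.Icc c 1) :
    |pot a - pot b| ≤ pot c := by
  have bounds : ∀ x ∈ Set.Icc c 1, 0 ≤ pot x ∧ pot x ≤ pot c := fun x hx =>
    ⟨pot_nonneg (hc.trans_le hx.1) hx.2, pot_anti hc hx.1⟩
  obtain ⟨ha₀, ha₁⟩ := bounds a ha
  obtain ⟨hb₀, hb₁⟩ := bounds b hb
  exact abs_sub_le_iff.2 ⟨by linarith, by linarith⟩

lemma tanh_nonneg (hx : 0 ≤ x) : 0 ≤ tanh x := by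
  rw [tanh_eq_sinh_div_cosh]
  exact div_nonneg (sinh_nonneg_iff.2 hx) (cosh_pos x).le

lemma hasDerivAt_log_cosh (x : ℝ) : HasDerivAt (fun x => log (cosh x)) (tanh x) x := by
  simpa [tanh_eq_sinh_div_cosh] using (hasDerivAt_cosh x).log (cosh_pos x).ne'

lemma abs_log_cosh_sub_log_cosh_le (a b : ℝ) :
    |log (cosh a) - log (cosh b)| ≤ |a - b| := by
  simpa using convex_univ.norm_image_sub_le_of_norm_hasDerivWithin_le
    (fun x _ => (hasDerivAt_log_cosh x).hasDerivWithinAt)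
    (fun x _ => (abs_tanh_lt_one x).le) (Set.mem_univ b) (Set.mem_univ a)

lemma abs_log_sub_log_le_two_mul {a b : ℝ} (ha₀ : 0 < a) (ha₁ : a ≤ 1) (hb₀ : 0 < b)
    (hb₁ : b ≤ 1) : |log a - log b| ≤ 2 * |pot a - pot b| := by
  rw [log_eq_neg_two_mul_log_cosh_pot ha₀ ha₁, log_eq_neg_two_mul_log_cosh_pot hb₀ hb₁,
    ← mul_sub, abs_mul, abs_neg, abs_two]
  exact mul_le_mul_of_nonneg_left (abs_log_cosh_sub_log_cosh_le _ _) zero_le_two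

end Potential

section Contraction

variable {ι : Type*} [Fintype ι] (lam : ℝ)

noncomputable def potStep (c : ι → ℝ) : ℝ := arsinh (√lam * ∏ i, (cosh (c i))⁻¹)

noncomputable def contractionRate (c : ι → ℝ) : ℝ := (∑ i, tanh (c i)) * tanh (potStep lam c)

variable {lam}

lemma sqrt_mul_prod_inv_cosh_nonneg (c : ι → ℝ) : 0 ≤ √lam * ∏ i, (cosh (c i))⁻¹ :=
  mul_nonneg (sqrt_nonneg _) <| prod_nonneg fun _ _ => (inv_pos.2 (cosh_pos _)).le

lemma potStep_nonneg (c : ι → ℝ) : 0 ≤ potStep lam c :=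
  arsinh_nonneg_iff.2 (sqrt_mul_prod_inv_cosh_nonneg c)

lemma sq_sqrt_mul_prod_inv_cosh (hlam : 0 ≤ lam) (c : ι → ℝ) :
    (√lam * ∏ i, (cosh (c i))⁻¹) ^ 2 = lam * ∏ i, (cosh (c i) ^ 2)⁻¹ := by
  rw [mul_pow, sq_sqrt hlam, ← prod_pow]
  simp only [inv_pow]

lemma pot_inv_one_add_mul_prod (hlam : 0 ≤ lam) {F : ι → ℝ} (hF₀ : ∀ i, 0 < F i)
    (hF₁ : ∀ i, F i ≤ 1) : pot (1 + lam * ∏ i, F i)⁻¹ = potStep lam (fun i => pot (F i)) := by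
  rw [potStep, ← pot_inv_one_add_sq (sqrt_mul_prod_inv_cosh_nonneg _),
    sq_sqrt_mul_prod_inv_cosh hlam]
  simp only [inv_cosh_pot_sq (hF₀ _) (hF₁ _)]

lemma hasDerivAt_potStep_add_smul (u w : ι → ℝ) (θ : ℝ) :
    HasDerivAt (fun s => potStep lam (u + s • w))
      (-(tanh (potStep lam (u + θ • w)) * ∑ i, tanh (u i + θ * w i) * w i)) θ := by
  have path : ∀ i, HasDerivAt (fun s => u i + s * w i) (w i) θ := fun i => by
    simpa using ((hasDerivAt_id θ).mul_const (w i)).const_add (u i)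
  have logSum := (HasDerivAt.fun_sum (u := univ) fun i _ =>
    (hasDerivAt_log_cosh _).comp θ (path i)).neg.exp.const_mul √lam |>.arsinh
  have prod_eq : ∀ c : ι → ℝ, ∏ i, (cosh (c i))⁻¹ = exp (-∑ i, log (cosh (c i))) := fun c => by
    rw [exp_neg, exp_sum]
    simp [exp_log (cosh_pos _)]
  convert logSum using 1
  · ext s
    simp [potStep, prod_eq]
  · simp only [potStep, tanh_arsinh, prod_eq, Pi.add_apply, Pi.neg_apply, Pi.smul_apply,
      smul_eq_mul, Function.comp_def]
    ring

lemma abs_potStep_sub_le {u v : ι → ℝ} (hu : 0 ≤ u) (hv : 0 ≤ v) {B D : ℝ} (hD₀ : 0 ≤ D)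
    (hD : ∀ i, |u i - v i| ≤ D) (hB : ∀ c : ι → ℝ, 0 ≤ c → contractionRate lam c ≤ B) :
    |potStep lam u - potStep lam v| ≤ B * D := by
  have deriv_le : ∀ θ ∈ Set.Ico (0 : ℝ) 1,
      ‖tanh (potStep lam (u + θ • (v - u))) * ∑ i, tanh (u i + θ * (v - u) i) * (v - u) i‖
        ≤ B * D := by
    rintro θ ⟨hθ₀, hθ₁⟩
    set c := u + θ • (v - u)
    have hc : 0 ≤ c := fun i => by
      have hui : 0 ≤ u i := hu i
      have hvi : 0 ≤ v i := hv i
      simp only [c, Pi.add_apply, Pi.smul_apply, Pi.sub_apply, smul_eq_mul, Pi.zero_apply]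
      nlinarith
    have tanh_c : ∀ i, 0 ≤ tanh (c i) := fun i => tanh_nonneg (hc i)
    have tanh_step : 0 ≤ tanh (potStep lam c) := tanh_nonneg (potStep_nonneg c)
    calc ‖tanh (potStep lam c) * ∑ i, tanh (c i) * (v - u) i‖
        ≤ tanh (potStep lam c) * ∑ i, tanh (c i) * D := by
          rw [norm_mul, norm_of_nonneg tanh_step]
          refine mul_le_mul_of_nonneg_left ((norm_sum_le _ _).trans (sum_le_sum fun i _ => ?_))
            tanh_step
          rw [norm_mul, norm_of_nonneg (tanh_c i), Real.norm_eq_abs, Pi.sub_apply, abs_sub_comm]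
          exact mul_le_mul_of_nonneg_left (hD i) (tanh_c i)
      _ = contractionRate lam c * D := by rw [contractionRate, ← sum_mul]; ring
      _ ≤ B * D := mul_le_mul_of_nonneg_right (hB c hc) hD₀
  have := norm_image_sub_le_of_norm_deriv_le_segment_01'
    (fun θ _ => (hasDerivAt_potStep_add_smul u (v - u) θ).hasDerivWithinAt)
    (fun θ hθ => by simpa only [norm_neg] using deriv_le θ hθ)
  simpa [abs_sub_comm] using this

end Contraction

section Inequality

variable {ι : Type*} [Fintype ι]

lemma prod_le_sum_div_card_pow [Nonempty ι] {z : ι → ℝ} (hz : 0 ≤ z) :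
    ∏ i, z i ≤ ((∑ i, z i) / Fintype.card ι) ^ Fintype.card ι := by
  have card_pos : 0 < Fintype.card ι := Fintype.card_pos
  have amgm := geom_mean_le_arith_mean univ (fun _ => 1) z (fun _ _ => zero_le_one)
    (by simp [card_pos]) (fun i _ => hz i)
  simp only [rpow_one, one_mul, sum_const, card_univ, nsmul_eq_mul, mul_one] at amgm
  have prod_nonneg : 0 ≤ ∏ i, z i := prod_nonneg fun i _ => hz i
  calc ∏ i, z i = ((∏ i, z i) ^ ((Fintype.card ι : ℝ)⁻¹)) ^ Fintype.card ι :=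
        (rpow_inv_natCast_pow prod_nonneg card_pos.ne').symm
    _ ≤ _ := pow_le_pow_left₀ (by positivity) amgm _

lemma sq_sum_sub_one_mul_prod_le {d : ℕ} (hd : 0 < d) (hι : Fintype.card ι ≤ d) {t : ι → ℝ}
    (ht₀ : 0 ≤ t) (ht₁ : t ≤ 1) :
    ((∑ i, t i) ^ 2 - 1) * ∏ i, (1 - t i ^ 2) ≤ ((d : ℝ) - 1) ^ (d + 1) / (d : ℝ) ^ d := by
  have one_sub_sq : ∀ i, 0 ≤ 1 - t i ^ 2 := fun i => by
    have : 0 ≤ t i := ht₀ i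
    have : t i ≤ 1 := ht₁ i
    nlinarith
  have Q_nonneg : 0 ≤ ∏ i, (1 - t i ^ 2) := prod_nonneg fun i _ => one_sub_sq i
  have hd' : (1 : ℝ) ≤ d := by exact_mod_cast hd
  have cauchySchwarz : (∑ i, t i) ^ 2 ≤ d * ∑ i, t i ^ 2 := by
    have := sq_sum_le_card_mul_sum_sq (s := univ) (f := t)
    rw [card_univ] at this
    exact this.trans (mul_le_mul_of_nonneg_right (by exact_mod_cast hι)
      (sum_nonneg fun i _ => sq_nonneg _))
  rcases le_or_gt (d * ∑ i, t i ^ 2) 1 with hs | hs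
  · exact (mul_nonpos_of_nonpos_of_nonneg (by linarith) Q_nonneg).trans (by positivity)
  set b := d * ∑ i, t i ^ 2 - 1
  -- AM-GM for `d + 1` numbers: `d (1 - tᵢ²)`, then `d - |ι|` copies of `d`, then `b`;
  -- they sum to `d² - 1`
  let z : Option (ι ⊕ Fin (d - Fintype.card ι)) → ℝ
    | none => b
    | some (.inl i) => d * (1 - t i ^ 2)
    | some (.inr _) => d
  have card_d : ((d - Fintype.card ι : ℕ) : ℝ) = d - Fintype.card ι := Nat.cast_sub hι
  have sum_z : ∑ j, z j = ((d : ℝ) + 1) * (d - 1) := by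
    simp only [Fintype.sum_option, Fintype.sum_sum_type, z, ← mul_sum, sum_sub_distrib, sum_const,
      card_univ, Fintype.card_fin, nsmul_eq_mul, card_d, b]
    ring
  have prod_z : ∏ j, z j = b * ((d : ℝ) ^ d * ∏ i, (1 - t i ^ 2)) := by
    simp only [Fintype.prod_option, Fintype.prod_sum_type, z, prod_mul_distrib, prod_const,
      card_univ, Fintype.card_fin]
    rw [mul_right_comm, ← pow_add, Nat.add_sub_cancel' hι]
  have amgm := prod_le_sum_div_card_pow (z := z) (by
    rintro (_ | _ | _)
    · exact (sub_pos.2 hs).le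
    · exact mul_nonneg (Nat.cast_nonneg _) (one_sub_sq _)
    · exact Nat.cast_nonneg _)
  simp only [sum_z, prod_z, Fintype.card_option, Fintype.card_sum, Fintype.card_fin,
    Nat.add_sub_cancel' hι, Nat.cast_add, Nat.cast_one] at amgm
  rw [mul_div_cancel_left₀ _ (by positivity)] at amgm
  have sq_sub_le : (∑ i, t i) ^ 2 - 1 ≤ b := by linarith
  rw [le_div_iff₀ (by positivity)]
  nlinarith [mul_le_mul_of_nonneg_right sq_sub_le
    (mul_nonneg (by positivity : (0 : ℝ) ≤ d ^ d) Q_nonneg)]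

end Inequality

section Rate

variable {ι : Type*} [Fintype ι] {lam : ℝ}

/-- `λ / λ_c(d)` for the tree-uniqueness threshold `λ_c(d) = d^d / (d - 1)^(d + 1)`
of branching `d = Δ - 1`. -/
noncomputable def activityRatio (lam : ℝ) (d : ℕ) : ℝ :=
  lam * ((d : ℝ) - 1) ^ (d + 1) / (d : ℝ) ^ d

noncomputable def decayRate (lam : ℝ) (d : ℕ) : ℝ :=
  √(1 - (1 - activityRatio lam d) / (1 + lam))

lemma inv_cosh_sq (x : ℝ) : (cosh x ^ 2)⁻¹ = 1 - tanh x ^ 2 := by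
  have := cosh_pos x
  rw [tanh_eq_sinh_div_cosh]
  field_simp
  linarith [cosh_sq x]

lemma tanh_potStep_sq (hlam : 0 ≤ lam) (c : ι → ℝ) :
    tanh (potStep lam c) ^ 2 =
      (lam * ∏ i, (1 - tanh (c i) ^ 2)) / (1 + lam * ∏ i, (1 - tanh (c i) ^ 2)) := by
  rw [potStep, tanh_arsinh, div_pow, sq_sqrt (by positivity), sq_sqrt_mul_prod_inv_cosh hlam]
  simp only [inv_cosh_sq]

lemma contractionRate_le_card {c : ι → ℝ} (hc : 0 ≤ c) :
    contractionRate lam c ≤ Fintype.card ι := by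
  have sum_le : ∑ i, tanh (c i) ≤ Fintype.card ι := by
    simpa using sum_le_sum fun i (_ : i ∈ univ) => (tanh_lt_one (c i)).le
  calc contractionRate lam c ≤ (∑ i, tanh (c i)) * 1 :=
        mul_le_mul_of_nonneg_left (tanh_lt_one _).le
          (sum_nonneg fun i _ => tanh_nonneg (hc i))
    _ ≤ Fintype.card ι := by rwa [mul_one]

lemma contractionRate_le_decayRate (hlam : 0 ≤ lam) {d : ℕ} (hd : 0 < d)
    (hι : Fintype.card ι ≤ d) (hr : activityRatio lam d ≤ 1)
    {c : ι → ℝ} (hc : 0 ≤ c) : contractionRate lam c ≤ decayRate lam d := by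
  set r := activityRatio lam d
  set σ := ∑ i, tanh (c i)
  set P := lam * ∏ i, (1 - tanh (c i) ^ 2)
  have tanh_mem : ∀ i, 0 ≤ tanh (c i) ∧ tanh (c i) ≤ 1 :=
    fun i => ⟨tanh_nonneg (hc i), (tanh_lt_one _).le⟩
  have P_nonneg : 0 ≤ P := mul_nonneg hlam <| prod_nonneg fun i _ => by
    nlinarith [tanh_mem i]
  have P_le : P ≤ lam := mul_le_of_le_one_right hlam <|
    prod_le_one (fun i _ => by nlinarith [tanh_mem i]) fun i _ => by nlinarith [tanh_mem i]
  have key : lam * ((σ ^ 2 - 1) * ∏ i, (1 - tanh (c i) ^ 2)) ≤ r := by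
    have := mul_le_mul_of_nonneg_left (sq_sum_sub_one_mul_prod_le hd hι
      (fun i => (tanh_mem i).1) fun i => (tanh_mem i).2) hlam
    rwa [← mul_div_assoc] at this
  have one_sub_r : 0 ≤ 1 - r := by linarith
  apply le_sqrt_of_sq_le
  calc contractionRate lam c ^ 2 = σ ^ 2 * P / (1 + P) := by
        rw [contractionRate, mul_pow, tanh_potStep_sq hlam, ← mul_div_assoc]
    _ ≤ 1 - (1 - r) / (1 + P) := by
        rw [div_le_iff₀ (by positivity), sub_mul, div_mul_cancel₀ _ (by positivity)]
        nlinarith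
    _ ≤ 1 - (1 - r) / (1 + lam) := by
        gcongr

lemma decayRate_pos (hlam : 0 < lam) {d : ℕ} (hd : 0 < d) : 0 < decayRate lam d := by
  have : (1 : ℝ) ≤ d := by exact_mod_cast hd
  apply sqrt_pos.2
  rw [sub_pos, div_lt_one (by linarith)]
  have : 0 ≤ activityRatio lam d := by
    have : (0 : ℝ) ≤ d - 1 := by linarith
    unfold activityRatio
    positivity
  linarith

lemma decayRate_lt_one (hlam : 0 ≤ lam) {d : ℕ}
    (hr : activityRatio lam d < 1) : decayRate lam d < 1 := by
  rw [decayRate, sqrt_lt' one_pos, one_pow, sub_lt_self_iff]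
  exact div_pos (by linarith) (by linarith)

end Rate

section SeqProd

variable {V : Type*} [DecidableEq V]

lemma exists_seqProd_eq_prod (A : Finset V) (l : List V) :
    ∃ B : Fin l.length → Finset V, (∀ i, B i ⊆ A) ∧
      ∀ f : Finset V → V → ℝ, seqProd f A l = ∏ i, f (B i) l[i] := by
  induction l generalizing A with
  | nil => exact ⟨finZeroElim, finZeroElim, fun f => by simp [seqProd]⟩
  | cons u l ih =>
    obtain ⟨B, hB, hprod⟩ := ih (A.erase u)
    refine ⟨Fin.cons (α := fun _ => Finset V) A B,
      Fin.cases subset_rfl fun i => (hB i).trans (erase_subset u A), fun f => ?_⟩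
    change _ = ∏ i : Fin (l.length + 1), _
    rw [seqProd, hprod, Fin.prod_univ_succ]
    rfl

end SeqProd

section Graph

variable {V : Type*} [Fintype V] [LinearOrder V] (G : SimpleGraph V) [DecidableRel G.Adj]
  {lam : ℝ}

lemma hcRec_succ (lam base : ℝ) (t : ℕ) (A : Finset V) (v : V) :
    hcRec G lam base (t + 1) A v = (1 + lam * seqProd (hcRec G lam base t) (A.erase v)
      ((G.neighborFinset v ∩ A.erase v).sort (· ≤ ·)))⁻¹ := by
  rw [hcRec]
  split_ifs with h
  · rw [h, sort_empty, seqProd, mul_one]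
  · rfl

lemma exists_hcRec_succ_eq (lam : ℝ) (A : Finset V) (v : V) :
    ∃ (B : Fin #(G.neighborFinset v ∩ A.erase v) → Finset V)
      (u : Fin #(G.neighborFinset v ∩ A.erase v) → V),
      (∀ i, u i ∈ G.neighborFinset v ∩ A.erase v) ∧ (∀ i, B i ⊆ A.erase v) ∧
      ∀ base t,
        hcRec G lam base (t + 1) A v = (1 + lam * ∏ i, hcRec G lam base t (B i) (u i))⁻¹ := by
  set l := (G.neighborFinset v ∩ A.erase v).sort (· ≤ ·)
  have hl : l.length = #(G.neighborFinset v ∩ A.erase v) := length_sort _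
  obtain ⟨B, hB, hprod⟩ := exists_seqProd_eq_prod (A.erase v) l
  refine ⟨fun i => B (i.cast hl.symm), fun i => l[i.cast hl.symm], fun i => ?_,
    fun i => hB _, fun base t => ?_⟩
  · exact (mem_sort _).1 (List.getElem_mem _)
  · rw [hcRec_succ, hprod, ← (finCongr hl).prod_comp]
    rfl

lemma inv_one_add_mul_mem_Icc (hlam : 0 ≤ lam) {p : ℝ} (hp : p ∈ Set.Icc 0 1) :
    (1 + lam * p)⁻¹ ∈ Set.Icc (1 + lam)⁻¹ 1 :=
  ⟨inv_anti₀ (by nlinarith [hp.1]) (by nlinarith [hp.2]),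
    inv_le_one_of_one_le₀ (by nlinarith [hp.1])⟩

lemma hcRec_succ_mem_Icc_of_mem_Icc (hlam : 0 ≤ lam) {base : ℝ} {t : ℕ}
    (h : ∀ A v, hcRec G lam base t A v ∈ Set.Icc 0 1) (A : Finset V) (v : V) :
    hcRec G lam base (t + 1) A v ∈ Set.Icc (1 + lam)⁻¹ 1 := by
  obtain ⟨B, u, -, -, unfold⟩ := exists_hcRec_succ_eq G lam A v
  rw [unfold]
  exact inv_one_add_mul_mem_Icc hlam ⟨prod_nonneg fun i _ => (h _ _).1,
    prod_le_one (fun i _ => (h _ _).1) fun i _ => (h _ _).2⟩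

lemma hcRec_mem_Icc (hlam : 0 ≤ lam) {base : ℝ} (hbase : base ∈ Set.Icc 0 1) :
    ∀ t A v, hcRec G lam base t A v ∈ Set.Icc 0 1
  | 0, _, _ => hbase
  | t + 1, A, v => Set.Icc_subset_Icc (by positivity) le_rfl <|
      hcRec_succ_mem_Icc_of_mem_Icc G hlam (hcRec_mem_Icc hlam hbase t) A v

lemma hcRec_succ_mem_Icc (hlam : 0 ≤ lam) {base : ℝ} (hbase : base ∈ Set.Icc 0 1) (t : ℕ)
    (A : Finset V) (v : V) : hcRec G lam base (t + 1) A v ∈ Set.Icc (1 + lam)⁻¹ 1 :=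
  hcRec_succ_mem_Icc_of_mem_Icc G hlam (hcRec_mem_Icc G hlam hbase t) A v

lemma hcRec_succ_mem_Ioc (hlam : 0 ≤ lam) {base : ℝ} (hbase : base ∈ Set.Icc 0 1) (t : ℕ)
    (A : Finset V) (v : V) : hcRec G lam base (t + 1) A v ∈ Set.Ioc 0 1 :=
  have h := hcRec_succ_mem_Icc G hlam hbase t A v
  ⟨(inv_pos.2 (by linarith)).trans_le h.1, h.2⟩

lemma abs_pot_hcRec_succ_succ_sub_le (hlam : 0 ≤ lam) {t : ℕ} {A : Finset V} {v : V}
    {K D : ℝ} (hD₀ : 0 ≤ D)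
    (hK : ∀ c : Fin #(G.neighborFinset v ∩ A.erase v) → ℝ, 0 ≤ c → contractionRate lam c ≤ K)
    (hD : ∀ u ∈ G.neighborFinset v ∩ A.erase v, ∀ B ⊆ A.erase v,
      |pot (hcRec G lam 1 (t + 1) B u) - pot (hcRec G lam 0 (t + 1) B u)| ≤ D) :
    |pot (hcRec G lam 1 (t + 2) A v) - pot (hcRec G lam 0 (t + 2) A v)| ≤ K * D := by
  obtain ⟨B, u, hu, hB, unfold⟩ := exists_hcRec_succ_eq G lam A v
  have mem₁ i := hcRec_succ_mem_Ioc G hlam ⟨zero_le_one, le_rfl⟩ t (B i) (u i)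
  have mem₀ i := hcRec_succ_mem_Ioc G hlam ⟨le_rfl, zero_le_one⟩ t (B i) (u i)
  rw [unfold, unfold, pot_inv_one_add_mul_prod hlam (fun i => (mem₁ i).1) (fun i => (mem₁ i).2),
    pot_inv_one_add_mul_prod hlam (fun i => (mem₀ i).1) (fun i => (mem₀ i).2)]
  exact abs_potStep_sub_le (fun i => pot_nonneg (mem₁ i).1 (mem₁ i).2)
    (fun i => pot_nonneg (mem₀ i).1 (mem₀ i).2) hD₀ (fun i => hD _ (hu i) _ (hB i)) hK

lemma card_neighborFinset_inter_erase_le {d : ℕ} (hdeg : ∀ u, G.degree u ≤ d + 1)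
    {A B : Finset V} {u v : V} (hu : u ∈ G.neighborFinset v ∩ A.erase v) (hB : B ⊆ A.erase v) :
    #(G.neighborFinset u ∩ B.erase u) ≤ d := by
  have hvu : v ∈ G.neighborFinset u :=
    (G.mem_neighborFinset u v).2 ((G.mem_neighborFinset v u).1 (mem_inter.1 hu).1).symm
  have hvB : v ∉ B := fun hv => notMem_erase v A (hB hv)
  have sub : G.neighborFinset u ∩ B.erase u ⊆ (G.neighborFinset u).erase v := fun x hx =>
    mem_erase.2 ⟨fun hxv => hvB (hxv ▸ (mem_erase.1 (mem_inter.1 hx).2).2),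
      (mem_inter.1 hx).1⟩
  calc #(G.neighborFinset u ∩ B.erase u) ≤ #((G.neighborFinset u).erase v) := card_le_card sub
    _ = G.degree u - 1 := by rw [card_erase_of_mem hvu, G.card_neighborFinset_eq_degree]
    _ ≤ d := by have := hdeg u; omega

lemma abs_pot_hcRec_succ_sub_le_pot (hlam : 0 ≤ lam) (t : ℕ) (A : Finset V) (v : V) :
    |pot (hcRec G lam 1 (t + 1) A v) - pot (hcRec G lam 0 (t + 1) A v)| ≤ pot (1 + lam)⁻¹ :=
  abs_pot_sub_pot_le (by positivity) (hcRec_succ_mem_Icc G hlam ⟨zero_le_one, le_rfl⟩ t A v)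
    (hcRec_succ_mem_Icc G hlam ⟨le_rfl, zero_le_one⟩ t A v)

lemma abs_pot_hcRec_succ_sub_le_of_card_le (hlam : 0 ≤ lam) {d : ℕ} (hd : 0 < d)
    (hr : activityRatio lam d ≤ 1) (hdeg : ∀ u, G.degree u ≤ d + 1)
    (t : ℕ) {A : Finset V} {v : V} (hA : #(G.neighborFinset v ∩ A.erase v) ≤ d) :
    |pot (hcRec G lam 1 (t + 1) A v) - pot (hcRec G lam 0 (t + 1) A v)| ≤
      pot (1 + lam)⁻¹ * decayRate lam d ^ t := by
  have M_nonneg : 0 ≤ pot (1 + lam)⁻¹ :=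
    pot_nonneg (by positivity) (inv_le_one_of_one_le₀ (by linarith))
  induction t generalizing A v with
  | zero => simpa using abs_pot_hcRec_succ_sub_le_pot G hlam 0 A v
  | succ t ih =>
    rw [pow_succ', mul_left_comm]
    exact abs_pot_hcRec_succ_succ_sub_le G hlam
      (mul_nonneg M_nonneg (pow_nonneg (sqrt_nonneg _) _))
      (fun c hc => contractionRate_le_decayRate hlam hd (by simpa using hA) hr hc)
      fun u hu B hB => ih (card_neighborFinset_inter_erase_le G hdeg hu hB)

lemma abs_pot_hcRec_succ_sub_le (hlam : 0 < lam) {d : ℕ} (hd : 0 < d)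
    (hr : activityRatio lam d < 1) (hdeg : ∀ u, G.degree u ≤ d + 1)
    (t : ℕ) (A : Finset V) (v : V) :
    |pot (hcRec G lam 1 (t + 1) A v) - pot (hcRec G lam 0 (t + 1) A v)| ≤
      (d + 1) * pot (1 + lam)⁻¹ * decayRate lam d ^ t / decayRate lam d := by
  have hρ₀ := decayRate_pos hlam hd
  have hρ₁ := decayRate_lt_one hlam.le hr
  have M_nonneg : 0 ≤ pot (1 + lam)⁻¹ :=
    pot_nonneg (by positivity) (inv_le_one_of_one_le₀ (by linarith))
  cases t with
  | zero =>
    refine (abs_pot_hcRec_succ_sub_le_pot G hlam.le 0 A v).trans ?_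
    rw [pow_zero, mul_one, le_div_iff₀ hρ₀]
    nlinarith
  | succ t =>
    have card_le : #(G.neighborFinset v ∩ A.erase v) ≤ d + 1 :=
      (card_le_card inter_subset_left).trans (G.card_neighborFinset_eq_degree v ▸ hdeg v)
    calc _ ≤ (d + 1) * (pot (1 + lam)⁻¹ * decayRate lam d ^ t) :=
          abs_pot_hcRec_succ_succ_sub_le G hlam.le (by positivity)
            (fun c hc => (contractionRate_le_card hc).trans <| by
              rw [Fintype.card_fin]; exact_mod_cast card_le)
            fun u hu B hB => abs_pot_hcRec_succ_sub_le_of_card_le G hlam.le hd hr.le hdeg t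
              (card_neighborFinset_inter_erase_le G hdeg hu hB)
      _ = _ := by field_simp; ring

end Graph

end HardCore

open HardCore in
/-- For the hard-core model with activity
`λ < (Δ−1)^{Δ−1}/(Δ−2)^Δ`, `Δ ≥ 3`, there exist constants `C > 0` and `0 < ρ < 1`
depending only on `λ` and `Δ` such that for every finite graph `G` of maximum degree at
most `Δ`, every vertex `v` and every `t ∈ ℕ`,
`|log Φ_G(v,t) − log Ψ_G(v,t)| ≤ C · ρ^t`. -/
theorem hardcore_correlation_decay (Δ : ℕ) (hΔ : 3 ≤ Δ) (lam : ℝ) (hlam : 0 < lam)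
    (hlt : lam < ((Δ : ℝ) - 1) ^ (Δ - 1) / ((Δ : ℝ) - 2) ^ Δ) :
    ∃ C > (0 : ℝ), ∃ ρ : ℝ, 0 < ρ ∧ ρ < 1 ∧
      ∀ (V : Type) (_ : Fintype V) (_ : LinearOrder V) (G : SimpleGraph V)
        (_ : DecidableRel G.Adj),
        (∀ u : V, G.degree u ≤ Δ) →
        ∀ (v : V) (t : ℕ),
          |Real.log (hcRec G lam 1 t Finset.univ v)
            - Real.log (hcRec G lam 0 t Finset.univ v)| ≤ C * ρ ^ t := by
  obtain ⟨d, rfl⟩ : ∃ d, Δ = d + 1 := ⟨Δ - 1, by omega⟩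
  have hd : 0 < d := by omega
  have hr : activityRatio lam d < 1 := by
    have : (0 : ℝ) < d - 1 := by
      have : (1 : ℝ) < d := by exact_mod_cast (by omega : 1 < d)
      linarith
    rw [activityRatio, div_lt_one (by positivity), ← lt_div_iff₀ (by positivity)]
    simpa [show (d : ℝ) + 1 - 2 = d - 1 by ring] using hlt
  set ρ := decayRate lam d
  set M := pot (1 + lam)⁻¹
  have hρ₀ : 0 < ρ := decayRate_pos hlam hd
  have hM : 0 < M := pot_pos (by positivity) (inv_lt_one_of_one_lt₀ (by linarith))
  refine ⟨2 * (d + 1) * M / ρ ^ 2, by positivity, ρ, hρ₀, decayRate_lt_one hlam.le hr, ?_⟩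
  intro V _ _ G _ hdeg v t
  cases t with
  | zero =>
    -- `Ψ(v, 0) = 0`, and `Real.log 0 = 0`
    simp only [hcRec, Real.log_one, Real.log_zero, sub_zero, abs_zero, pow_zero, mul_one]
    positivity
  | succ t =>
    obtain ⟨hΦ₀, hΦ₁⟩ := hcRec_succ_mem_Ioc G hlam.le ⟨zero_le_one, le_rfl⟩ t univ v
    obtain ⟨hΨ₀, hΨ₁⟩ := hcRec_succ_mem_Ioc G hlam.le ⟨le_rfl, zero_le_one⟩ t univ v
    calc _ ≤ 2 * |pot (hcRec G lam 1 (t + 1) univ v) - pot (hcRec G lam 0 (t + 1) univ v)| :=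
          abs_log_sub_log_le_two_mul hΦ₀ hΦ₁ hΨ₀ hΨ₁
      _ ≤ 2 * ((d + 1) * M * ρ ^ t / ρ) := by
          gcongr
          exact abs_pot_hcRec_succ_sub_le G hlam hd hr hdeg t univ v
      _ = _ := by field_simp; ring
end

section
/- If the hard-core model on ℤ^d with activity λ satisfies Strong Spatial Mixing, then the free energy exists and equals P(d,λ) = −log P_{ℤ^d_{≺0}}(0 ∉ I), i.e., lim_{n→∞} (log Z_{B_n})/|B_n| = −log p*, where p* is the probability under the unique Gibbs measure on the sublattice ℤ^d_{≺0} = {u ∈ ℤ^d : u ≺ 0} ∪ {0} (lexicographic order) that the origin is not in the random independent set. -/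
open Finset Filter

/-- Nearest-neighbor adjacency on `ℤ^d`: ℓ¹-distance equal to `1`. -/
def latAdj {d : ℕ} (v u : Fin d → ℤ) : Prop := (∑ j, |v j - u j|) = 1

instance {d : ℕ} : DecidableRel (latAdj (d := d)) := fun v u => by
  unfold latAdj; infer_instance

/-- Lexicographic (by highest differing coordinate) strict order on `ℤ^d`:
`v ≺ u` iff `u_d > v_d`, or there is `k` with `u_k > v_k` and `u_j = v_j` for `j > k`. -/
def lexPrec {d : ℕ} (v u : Fin d → ℤ) : Prop :=
  ∃ k : Fin d, v k < u k ∧ ∀ j : Fin d, k < j → v j = u j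

instance {d : ℕ} : DecidableRel (lexPrec (d := d)) := fun v u => by
  unfold lexPrec; infer_instance

/-- The box `B_n = [-n, n]^d ∩ ℤ^d`. -/
noncomputable def latCube (d n : ℕ) : Finset (Fin d → ℤ) :=
  Finset.Icc (fun _ => -(n : ℤ)) (fun _ => (n : ℤ))

/-- Finite-volume hard-core partition function on the region `A ⊆ ℤ^d` with activity
`lam`: sum of `lam ^ |I|` over sets `I ⊆ A` independent for the lattice adjacency. -/
noncomputable def hcZd {d : ℕ} (lam : ℝ) (A : Finset (Fin d → ℤ)) : ℝ :=
  ∑ I ∈ A.powerset.filter (fun I => ∀ u ∈ I, ∀ w ∈ I, ¬ latAdj u w), lam ^ I.card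

/-- Finite-volume probability that the origin is NOT in the random independent set,
under the hard-core measure on the region `A`. -/
noncomputable def hcPnot0 {d : ℕ} (lam : ℝ) (A : Finset (Fin d → ℤ)) : ℝ :=
  hcZd lam (A.erase 0) / hcZd lam A

/-- The finite-volume truncation `B_n ∩ ℤ^d_{≺0}` of the sublattice
`ℤ^d_{≺0} = {u : u ≺ 0} ∪ {0}`. -/
noncomputable def halfLat (d n : ℕ) : Finset (Fin d → ℤ) :=
  (latCube d n).filter (fun u => lexPrec u 0 ∨ u = 0)

/-!
Order `ℤ^d` lexicographically and remove the sites of the box `B_n` one at a time from the top: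
the chain rule gives `log Z(B_n) = -∑_{v ∈ B_n} log P(v ∉ I)`, the probability being taken in the
hard-core model on the sites of `B_n` that are `≼ v`. Translated so that `v` sits at the origin,
this region coincides with `ℤ^d_{≺0}` on `B_r` whenever `v ∈ B_{n-r}`, so by strong spatial mixing
the factor is within `R(r)` of the truncated marginal on `B_r ∩ ℤ^d_{≺0}`; the same argument shows
that these marginals form a Cauchy sequence, with limit `p*`. Every factor lies in
`[1/(1+λ), 1]`, where `log` is `(1+λ)`-Lipschitz and bounded by `log(1+λ)`, and the boundary layer
`B_n \ B_{n-r}` is a fraction at most `2rd/(2n+1)` of the box; hence the average of the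
logarithms tends to `log p*`.
-/

section LexOrder
variable {d : ℕ}

theorem lexPrec_iff_toColex_lt {v u : Fin d → ℤ} : lexPrec v u ↔ toColex v < toColex u :=
  ⟨fun ⟨k, hlt, heq⟩ => ⟨k, heq, hlt⟩, fun ⟨k, heq, hlt⟩ => ⟨k, hlt, heq⟩⟩

theorem lexPrec_sub_right {v u : Fin d → ℤ} (t : Fin d → ℤ) :
    lexPrec (v - t) (u - t) ↔ lexPrec v u := by
  simp [lexPrec]

end LexOrder

section PartitionFunction
variable {d : ℕ} {lam : ℝ}

def IsLatIndep (I : Finset (Fin d → ℤ)) : Prop := ∀ u ∈ I, ∀ w ∈ I, ¬ latAdj u w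

instance : DecidablePred (IsLatIndep (d := d)) := fun I => by
  unfold IsLatIndep; infer_instance

def hcWeight (lam : ℝ) (I : Finset (Fin d → ℤ)) : ℝ :=
  if IsLatIndep I then lam ^ I.card else 0

theorem hcZd_eq_sum_powerset (lam : ℝ) (A : Finset (Fin d → ℤ)) :
    hcZd lam A = ∑ I ∈ A.powerset, hcWeight lam I := by
  rw [hcZd, sum_filter]
  rfl

theorem hcWeight_nonneg (hlam : 0 ≤ lam) (I : Finset (Fin d → ℤ)) : 0 ≤ hcWeight lam I := by
  unfold hcWeight; split_ifs <;> positivity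

theorem hcWeight_insert_le (hlam : 0 ≤ lam) {a : Fin d → ℤ} {I : Finset (Fin d → ℤ)}
    (ha : a ∉ I) : hcWeight lam (insert a I) ≤ lam * hcWeight lam I := by
  unfold hcWeight
  by_cases hins : IsLatIndep (insert a I)
  · have hI : IsLatIndep I := fun u hu w hw =>
      hins u (mem_insert_of_mem hu) w (mem_insert_of_mem hw)
    rw [if_pos hins, if_pos hI, card_insert_of_notMem ha, pow_succ']
  · rw [if_neg hins]
    exact mul_nonneg hlam (hcWeight_nonneg hlam I)

theorem hcWeight_image {f : (Fin d → ℤ) → Fin d → ℤ} (hf : Function.Injective f)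
    (hadj : ∀ u w, latAdj (f u) (f w) ↔ latAdj u w) (I : Finset (Fin d → ℤ)) :
    hcWeight lam (I.image f) = hcWeight lam I := by
  have hind : IsLatIndep (I.image f) ↔ IsLatIndep I := by
    simp [IsLatIndep, hadj]
  rw [hcWeight, hcWeight, card_image_of_injective I hf]
  exact if_congr hind rfl rfl

theorem one_le_hcZd (hlam : 0 ≤ lam) (A : Finset (Fin d → ℤ)) : 1 ≤ hcZd lam A := by
  rw [hcZd_eq_sum_powerset]
  refine le_of_eq_of_le ?_
    (single_le_sum (fun I _ => hcWeight_nonneg hlam I) (empty_mem_powerset A))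
  simp [hcWeight, IsLatIndep]

theorem hcZd_pos (hlam : 0 ≤ lam) (A : Finset (Fin d → ℤ)) : 0 < hcZd lam A :=
  one_pos.trans_le (one_le_hcZd hlam A)

theorem hcZd_mono (hlam : 0 ≤ lam) {A B : Finset (Fin d → ℤ)} (h : A ⊆ B) :
    hcZd lam A ≤ hcZd lam B := by
  rw [hcZd_eq_sum_powerset, hcZd_eq_sum_powerset]
  exact sum_le_sum_of_subset_of_nonneg (powerset_mono.2 h) fun I _ _ => hcWeight_nonneg hlam I

theorem hcZd_insert_le (hlam : 0 ≤ lam) {a : Fin d → ℤ} {A : Finset (Fin d → ℤ)} (ha : a ∉ A) :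
    hcZd lam (insert a A) ≤ (1 + lam) * hcZd lam A := by
  rw [hcZd_eq_sum_powerset, hcZd_eq_sum_powerset, sum_powerset_insert ha, add_mul, one_mul,
    mul_sum]
  gcongr with I hI
  exact hcWeight_insert_le hlam fun haI => ha (mem_powerset.1 hI haI)

theorem hcZd_le_erase (hlam : 0 ≤ lam) (A : Finset (Fin d → ℤ)) (v : Fin d → ℤ) :
    hcZd lam A ≤ (1 + lam) * hcZd lam (A.erase v) := by
  by_cases hv : v ∈ A
  · conv_lhs => rw [← insert_erase hv]
    exact hcZd_insert_le hlam (notMem_erase v A)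
  · rw [erase_eq_of_notMem hv]
    exact le_mul_of_one_le_left (hcZd_pos hlam A).le (by linarith)

theorem hcZd_image {f : (Fin d → ℤ) → Fin d → ℤ} (hf : Function.Injective f)
    (hadj : ∀ u w, latAdj (f u) (f w) ↔ latAdj u w) (lam : ℝ) (A : Finset (Fin d → ℤ)) :
    hcZd lam (A.image f) = hcZd lam A := by
  rw [hcZd_eq_sum_powerset, hcZd_eq_sum_powerset, powerset_image,
    sum_image fun I _ J _ h => image_injective hf h]
  exact sum_congr rfl fun I _ => hcWeight_image hf hadj I

theorem hcZd_image_sub_right (lam : ℝ) (A : Finset (Fin d → ℤ)) (t : Fin d → ℤ) :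
    hcZd lam (A.image (· - t)) = hcZd lam A :=
  hcZd_image sub_left_injective (fun u w => by simp [latAdj]) lam A

theorem hcPnot0_image_sub_right (lam : ℝ) (A : Finset (Fin d → ℤ)) (v : Fin d → ℤ) :
    hcPnot0 lam (A.image (· - v)) = hcZd lam (A.erase v) / hcZd lam A := by
  rw [hcPnot0, ← sub_self v, ← image_erase sub_left_injective, hcZd_image_sub_right,
    hcZd_image_sub_right]

theorem hcPnot0_le_one (hlam : 0 ≤ lam) (A : Finset (Fin d → ℤ)) : hcPnot0 lam A ≤ 1 :=
  div_le_one_of_le₀ (hcZd_mono hlam (erase_subset 0 A)) (hcZd_pos hlam A).le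

theorem inv_one_add_le_hcPnot0 (hlam : 0 ≤ lam) (A : Finset (Fin d → ℤ)) :
    (1 + lam)⁻¹ ≤ hcPnot0 lam A := by
  rw [hcPnot0, le_div_iff₀ (hcZd_pos hlam A), inv_mul_le_iff₀ (by positivity)]
  exact hcZd_le_erase hlam A 0

end PartitionFunction

section Telescoping
variable {d : ℕ}

def lexPast (A : Finset (Fin d → ℤ)) (v : Fin d → ℤ) : Finset (Fin d → ℤ) :=
  (A.filter fun u => lexPrec u v ∨ u = v).image (· - v)

theorem lexPast_insert_of_forall_le {a : Fin d → ℤ} {A : Finset (Fin d → ℤ)} (ha : a ∉ A)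
    (hmax : ∀ u ∈ A, toColex u ≤ toColex a) {u : Fin d → ℤ} (hu : u ∈ A) :
    lexPast (insert a A) u = lexPast A u := by
  have hau : ¬ (lexPrec a u ∨ a = u) := by
    rintro (hlt | rfl)
    · exact (lexPrec_iff_toColex_lt.1 hlt).not_ge (hmax u hu)
    · exact ha hu
  rw [lexPast, filter_insert, if_neg hau, lexPast]

theorem lexPast_insert_self {a : Fin d → ℤ} {A : Finset (Fin d → ℤ)}
    (hmax : ∀ u ∈ A, toColex u ≤ toColex a) :
    lexPast (insert a A) a = (insert a A).image (· - a) := by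
  rw [lexPast, filter_true_of_mem]
  intro u hu
  rcases mem_insert.1 hu with rfl | hu
  · exact Or.inr rfl
  · exact (hmax u hu).lt_or_eq.imp lexPrec_iff_toColex_lt.2 toColex_inj.1

theorem log_hcZd_eq_neg_sum {lam : ℝ} (hlam : 0 ≤ lam) (A : Finset (Fin d → ℤ)) :
    Real.log (hcZd lam A) = -∑ v ∈ A, Real.log (hcPnot0 lam (lexPast A v)) := by
  induction A using Finset.induction_on_max_value (toColex : (Fin d → ℤ) → Colex (Fin d → ℤ)) with
  | empty => simp [hcZd_eq_sum_powerset, hcWeight, IsLatIndep]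
  | insert a A ha hmax ih =>
    rw [sum_insert ha, lexPast_insert_self hmax, hcPnot0_image_sub_right, erase_insert ha,
      sum_congr rfl fun u hu => by rw [lexPast_insert_of_forall_le ha hmax hu],
      Real.log_div (hcZd_pos hlam A).ne' (hcZd_pos hlam _).ne', ih]
    ring

end Telescoping

section Box
variable {d : ℕ}

theorem mem_latCube {n : ℕ} {v : Fin d → ℤ} :
    v ∈ latCube d n ↔ ∀ j, -(n : ℤ) ≤ v j ∧ v j ≤ n := by
  simp [latCube, Pi.le_def, forall_and]

theorem zero_mem_latCube (n : ℕ) : (0 : Fin d → ℤ) ∈ latCube d n :=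
  mem_latCube.2 fun _ => by simp

theorem add_mem_latCube {m r : ℕ} {x v : Fin d → ℤ} (hx : x ∈ latCube d r)
    (hv : v ∈ latCube d m) : x + v ∈ latCube d (m + r) := by
  rw [mem_latCube] at *
  intro j
  have := hx j
  have := hv j
  push_cast
  constructor <;> simp only [Pi.add_apply] <;> linarith

theorem latCube_mono {m n : ℕ} (h : m ≤ n) : latCube d m ⊆ latCube d n := fun _ hv =>
  mem_latCube.2 fun j => by have := mem_latCube.1 hv j; omega

theorem card_latCube (n : ℕ) : (latCube d n).card = (2 * n + 1) ^ d := by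
  simp only [latCube, Pi.card_Icc, Int.card_Icc, prod_const, card_univ, Fintype.card_fin]
  congr 1
  omega

theorem lexPast_inter_latCube {A : Finset (Fin d → ℤ)} {v : Fin d → ℤ} {r : ℕ}
    (h : ∀ x ∈ latCube d r, x + v ∈ A) : lexPast A v ∩ latCube d r = halfLat d r := by
  ext x
  simp only [lexPast, halfLat, mem_inter, mem_filter, mem_image]
  constructor
  · rintro ⟨⟨u, ⟨-, hu⟩, rfl⟩, hx⟩
    refine ⟨hx, hu.imp (fun hlt => ?_) (fun heq => by rw [heq, sub_self])⟩
    rwa [← sub_self v, lexPrec_sub_right]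
  · rintro ⟨hx, hpast⟩
    refine ⟨⟨x + v, ⟨h x hx, hpast.imp (fun hlt => ?_) (fun heq => by rw [heq, zero_add])⟩,
      add_sub_cancel_right x v⟩, hx⟩
    rwa [← lexPrec_sub_right v, add_sub_cancel_right, sub_self]

theorem lexPast_latCube_inter_latCube {r n : ℕ} (h : r ≤ n) {v : Fin d → ℤ}
    (hv : v ∈ latCube d (n - r)) : lexPast (latCube d n) v ∩ latCube d r = halfLat d r :=
  lexPast_inter_latCube fun _ hx => Nat.sub_add_cancel h ▸ add_mem_latCube hx hv

theorem lexPast_latCube_zero (n : ℕ) : lexPast (latCube d n) 0 = halfLat d n := by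
  simp [lexPast, halfLat]

theorem halfLat_inter_latCube {r n : ℕ} (h : r ≤ n) :
    halfLat d n ∩ latCube d r = halfLat d r := by
  rw [← lexPast_latCube_zero]
  exact lexPast_latCube_inter_latCube h (zero_mem_latCube _)

theorem card_latCube_sub_card_latCube_le {r n : ℕ} (h : r ≤ n) :
    ((latCube d n).card : ℝ) - (latCube d (n - r)).card
      ≤ 2 * r * d / (2 * n + 1) * (latCube d n).card := by
  have hpos : (0 : ℝ) < 2 * n + 1 := by positivity
  have hbern := one_add_mul_sub_le_pow (a := (2 * ((n : ℝ) - r) + 1) / (2 * n + 1))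
    (by rw [le_div_iff₀ hpos]; linarith [(Nat.cast_le (α := ℝ)).2 h]) d
  rw [div_pow, le_div_iff₀ (by positivity)] at hbern
  rw [card_latCube, card_latCube]
  push_cast [Nat.cast_sub h]
  field_simp at hbern ⊢
  linarith

end Box

section RealLemmas

theorem abs_log_le_log_of_inv_le {c x : ℝ} (hc : 1 ≤ c) (hcx : c⁻¹ ≤ x) (hx : x ≤ 1) :
    |Real.log x| ≤ Real.log c := by
  have hx0 : 0 < x := (inv_pos.2 (zero_lt_one.trans_le hc)).trans_le hcx
  rw [abs_of_nonpos (Real.log_nonpos hx0.le hx), neg_le, ← Real.log_inv]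
  exact Real.log_le_log (by positivity) hcx

theorem abs_log_sub_log_le_mul {c a b : ℝ} (hc : 0 < c) (ha : c⁻¹ ≤ a) (hb : c⁻¹ ≤ b) :
    |Real.log a - Real.log b| ≤ c * |a - b| := by
  have key : ∀ x y : ℝ, c⁻¹ ≤ x → c⁻¹ ≤ y → Real.log x - Real.log y ≤ c * |x - y| := by
    intro x y hx hy
    have hx0 : 0 < x := (inv_pos.2 hc).trans_le hx
    have hy0 : 0 < y := (inv_pos.2 hc).trans_le hy
    calc Real.log x - Real.log y = Real.log (x / y) := (Real.log_div hx0.ne' hy0.ne').symm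
      _ ≤ x / y - 1 := Real.log_le_sub_one_of_pos (by positivity)
      _ = y⁻¹ * (x - y) := by field_simp
      _ ≤ y⁻¹ * |x - y| := mul_le_mul_of_nonneg_left (le_abs_self _) (inv_nonneg.2 hy0.le)
      _ ≤ c * |x - y| := mul_le_mul_of_nonneg_right (inv_le_of_inv_le₀ hc hy) (abs_nonneg _)
  rw [abs_sub_le_iff]
  exact ⟨key a b ha hb, abs_sub_comm a b ▸ key b a hb ha⟩

theorem abs_sum_div_card_sub_le {ι : Type*} [DecidableEq ι] {s t : Finset ι} (hts : t ⊆ s)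
    (hs : s.Nonempty) {f : ι → ℝ} {c δ M : ℝ} (hδ : 0 ≤ δ) (hbulk : ∀ x ∈ t, |f x - c| ≤ δ)
    (hall : ∀ x ∈ s, |f x - c| ≤ M) :
    |(∑ x ∈ s, f x) / s.card - c| ≤ δ + M * ((s \ t).card / s.card) := by
  have hcard : (0 : ℝ) < s.card := by exact_mod_cast hs.card_pos
  have hts' : (t.card : ℝ) ≤ s.card := by exact_mod_cast card_le_card hts
  have hmean : (∑ x ∈ s, f x) / s.card - c = (∑ x ∈ s, (f x - c)) / s.card := by
    rw [sum_sub_distrib, sum_const, nsmul_eq_mul]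
    field_simp
  rw [hmean, abs_div, abs_of_pos hcard, div_le_iff₀ hcard]
  calc |∑ x ∈ s, (f x - c)| ≤ ∑ x ∈ s, |f x - c| := abs_sum_le_sum_abs _ _
    _ = ∑ x ∈ s \ t, |f x - c| + ∑ x ∈ t, |f x - c| := (sum_sdiff hts).symm
    _ ≤ ∑ _x ∈ s \ t, M + ∑ _x ∈ t, δ :=
        add_le_add (sum_le_sum fun x hx => hall x (mem_sdiff.1 hx).1) (sum_le_sum hbulk)
    _ = (s \ t).card * M + t.card * δ := by simp only [sum_const, nsmul_eq_mul]
    _ ≤ (δ + M * ((s \ t).card / s.card)) * s.card := by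
        field_simp
        nlinarith

theorem tendsto_of_abs_sub_le_add {a δ : ℕ → ℝ} {e : ℕ → ℕ → ℝ} {c : ℝ}
    (hδ : Tendsto δ atTop (nhds 0)) (he : ∀ r, Tendsto (e r) atTop (nhds 0))
    (h : ∀ r, ∀ᶠ n in atTop, |a n - c| ≤ δ r + e r n) : Tendsto a atTop (nhds c) := by
  rw [Metric.tendsto_nhds]
  intro ε hε
  obtain ⟨r, hr⟩ := (hδ.eventually (gt_mem_nhds (half_pos hε))).exists
  filter_upwards [h r, (he r).eventually (gt_mem_nhds (half_pos hε))] with n hn hen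
  rw [Real.dist_eq]
  linarith

end RealLemmas

section StrongSpatialMixing
variable {d : ℕ} {lam : ℝ} {R : ℕ → ℝ}

def IsSSMRate (d : ℕ) (lam : ℝ) (R : ℕ → ℝ) : Prop :=
  ∀ (r : ℕ) (A₁ A₂ : Finset (Fin d → ℤ)), A₁ ∩ latCube d r = A₂ ∩ latCube d r →
    |hcPnot0 lam A₁ - hcPnot0 lam A₂| ≤ R r

theorem cauchySeq_hcPnot0_halfLat (hR : Tendsto R atTop (nhds 0)) (hSSM : IsSSMRate d lam R) :
    CauchySeq fun n => hcPnot0 lam (halfLat d n) :=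
  cauchySeq_of_le_tendsto_0 R (fun _ _ N hn hm =>
    hSSM N _ _ (by rw [halfLat_inter_latCube hn, halfLat_inter_latCube hm])) hR

theorem abs_log_hcZd_latCube_div_card_sub_le (hlam : 0 ≤ lam) (hSSM : IsSSMRate d lam R)
    {p : ℝ} (hp : (1 + lam)⁻¹ ≤ p) (hp1 : p ≤ 1) {r n : ℕ} (h : r ≤ n) :
    |Real.log (hcZd lam (latCube d n)) / (latCube d n).card - -Real.log p|
      ≤ (1 + lam) * (R r + |hcPnot0 lam (halfLat d r) - p|)
        + 2 * Real.log (1 + lam) * (2 * r * d / (2 * n + 1)) := by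
  set q := hcPnot0 lam (halfLat d r)
  set P := fun v => hcPnot0 lam (lexPast (latCube d n) v)
  have hc : (0 : ℝ) < 1 + lam := by linarith
  have hbulk : ∀ v ∈ latCube d (n - r),
      |-Real.log (P v) - -Real.log p| ≤ (1 + lam) * (R r + |q - p|) := by
    intro v hv
    have hclose : |P v - q| ≤ R r := hSSM r _ _ <| by
      rw [lexPast_latCube_inter_latCube h hv, halfLat_inter_latCube le_rfl]
    calc |-Real.log (P v) - -Real.log p| = |Real.log p - Real.log (P v)| := by ring_nf
      _ ≤ (1 + lam) * |p - P v| := abs_log_sub_log_le_mul hc hp (inv_one_add_le_hcPnot0 hlam _)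
      _ ≤ (1 + lam) * (R r + |q - p|) := by
          gcongr
          calc |p - P v| ≤ |P v - q| + |q - p| := by rw [abs_sub_comm]; exact abs_sub_le _ _ _
            _ ≤ R r + |q - p| := by gcongr
  have hall : ∀ v ∈ latCube d n, |-Real.log (P v) - -Real.log p| ≤ 2 * Real.log (1 + lam) := by
    intro v _
    have hlog := abs_log_le_log_of_inv_le (by linarith) hp hp1
    have hlogP := abs_log_le_log_of_inv_le (by linarith)
      (inv_one_add_le_hcPnot0 hlam (lexPast (latCube d n) v)) (hcPnot0_le_one hlam _)
    calc |-Real.log (P v) - -Real.log p| ≤ |-Real.log (P v)| + |-Real.log p| := abs_sub _ _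
      _ ≤ 2 * Real.log (1 + lam) := by rw [abs_neg, abs_neg]; linarith
  have hδ : 0 ≤ (1 + lam) * (R r + |q - p|) := (abs_nonneg _).trans (hbulk 0 (zero_mem_latCube _))
  have hsub := latCube_mono (d := d) (n.sub_le r)
  rw [log_hcZd_eq_neg_sum hlam, ← sum_neg_distrib]
  refine (abs_sum_div_card_sub_le hsub ⟨0, zero_mem_latCube n⟩ hδ hbulk hall).trans ?_
  refine add_le_add_right (mul_le_mul_of_nonneg_left ?_ ?_) _
  · rw [card_sdiff_of_subset hsub, Nat.cast_sub (card_le_card hsub),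
      div_le_iff₀ (Nat.cast_pos.2 (card_pos.2 ⟨0, zero_mem_latCube n⟩))]
    exact card_latCube_sub_card_latCube_le h
  · exact mul_nonneg zero_le_two (Real.log_nonneg (by linarith))

end StrongSpatialMixing

theorem hardcore_free_energy_representation_general (d : ℕ)
    (lam : ℝ) (hlam : 0 < lam)
    (SSM : ∃ R : ℕ → ℝ, Tendsto R atTop (nhds 0) ∧
      ∀ (r : ℕ) (A₁ A₂ : Finset (Fin d → ℤ)),
        A₁ ∩ latCube d r = A₂ ∩ latCube d r →
        |hcPnot0 lam A₁ - hcPnot0 lam A₂| ≤ R r) :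
    ∃ pstar : ℝ, 0 < pstar ∧
      Tendsto (fun n => hcPnot0 lam (halfLat d n)) atTop (nhds pstar) ∧
      Tendsto (fun n => Real.log (hcZd lam (latCube d n)) / ((latCube d n).card : ℝ))
        atTop (nhds (- Real.log pstar)) := by
  obtain ⟨R, hR, hSSM⟩ := SSM
  obtain ⟨p, hp⟩ := cauchySeq_tendsto_of_complete (cauchySeq_hcPnot0_halfLat hR hSSM)
  have hp_ge : (1 + lam)⁻¹ ≤ p := ge_of_tendsto' hp fun n => inv_one_add_le_hcPnot0 hlam.le _
  have hp_le : p ≤ 1 := le_of_tendsto' hp fun n => hcPnot0_le_one hlam.le _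
  refine ⟨p, (inv_pos.2 (by linarith)).trans_le hp_ge, hp, ?_⟩
  have hbulk_err : Tendsto (fun r => (1 + lam) * (R r + |hcPnot0 lam (halfLat d r) - p|))
      atTop (nhds 0) := by
    simpa using (hR.add (hp.sub_const p).abs).const_mul (1 + lam)
  have hbdry_err (r : ℕ) :
      Tendsto (fun n : ℕ => 2 * Real.log (1 + lam) * (2 * r * d / (2 * n + 1))) atTop (nhds 0) := by
    simpa using (tendsto_const_nhds.div_atTop (tendsto_atTop_add_const_right _ 1
      (tendsto_natCast_atTop_atTop.const_mul_atTop two_pos))).const_mul (2 * Real.log (1 + lam))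
  exact tendsto_of_abs_sub_le_add hbulk_err hbdry_err fun r => eventually_atTop.2
    ⟨r, fun n hn => abs_log_hcZd_latCube_div_card_sub_le hlam.le hSSM hp_ge hp_le hn⟩

/-- If the hard-core model on `ℤ^d` with activity `λ` satisfies Strong
Spatial Mixing (formulated here in its hard-core form: marginals at the origin on any two
finite regions agreeing on the box `B_r` differ by at most `R(r)`, where `R(r) → 0`;
conditioning on spins is equivalent to deleting vertices for the hard-core model), then
the free energy exists and `lim_n (log Z_{B_n})/|B_n| = −log p*`, where
`p* = P_{ℤ^d_{≺0}}(0 ∉ I)` is the limit of the finite-volume marginals on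
`B_n ∩ ℤ^d_{≺0}`. -/
theorem hardcore_free_energy_representation (d : ℕ) (hd : 1 ≤ d)
    (lam : ℝ) (hlam : 0 < lam)
    (SSM : ∃ R : ℕ → ℝ, Tendsto R atTop (nhds 0) ∧
      ∀ (r : ℕ) (A₁ A₂ : Finset (Fin d → ℤ)),
        A₁ ∩ latCube d r = A₂ ∩ latCube d r →
        |hcPnot0 lam A₁ - hcPnot0 lam A₂| ≤ R r) :
    ∃ pstar : ℝ, 0 < pstar ∧
      Tendsto (fun n => hcPnot0 lam (halfLat d n)) atTop (nhds pstar) ∧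
      Tendsto (fun n => Real.log (hcZd lam (latCube d n)) / ((latCube d n).card : ℝ))
        atTop (nhds (- Real.log pstar)) :=
  hardcore_free_energy_representation_general d lam hlam SSM
end
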